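/- The function artanh(x·sec θ) admits the expansion artanh(x sec θ) = x + x·θ²/2 + x³/3 + R(x, θ) where |R(x, θ)| ≤ C·(x·θ⁴ + x³·θ² + x⁵) for some constant C, uniformly for x, θ in a neighborhood of 0 with 0 ≤ x ≤ 1/2, |θ| ≤ 1/2. -/

import Mathlib

/-- The real inverse hyperbolic tangent on `(-1, 1)`. -/
noncomputable def artanh (t : ℝ) : ℝ := (1 / 2) * Real.log ((1 + t) / (1 - t))

lemma artanh_taylor {t : ℝ} (ht0 : 0 ≤ t) (ht : t ≤ 7/12) :
    |artanh t - (t + t^3/3)| ≤ 3 * t^5 := by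
  have h1 : |t| < 1 := by rw [abs_of_nonneg ht0]; linarith
  have A := Real.abs_log_sub_add_sum_range_le h1 4
  simp only [Finset.sum_range_succ] at A
  have h2 : |(-t)| < 1 := by rwa [abs_neg]
  have B := Real.abs_log_sub_add_sum_range_le h2 4
  simp only [Finset.sum_range_succ] at B
  rw [abs_neg] at B
  have hat : |t| = t := abs_of_nonneg ht0
  rw [hat] at A B
  norm_num at A B
  have hp : (0:ℝ) < 1 + t := by linarith
  have hm : (0:ℝ) < 1 - t := by linarith
  have key : artanh t - (t + t^3/3) =
      (1/2) * (-t + t^2/2 + (-t)^3/3 + (-t)^4/4 + Real.log (1+t))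
      - (1/2) * (t + t^2/2 + t^3/3 + t^4/4 + Real.log (1-t)) := by
    unfold artanh
    rw [Real.log_div hp.ne' hm.ne']
    ring
  have hA : |t + t^2/2 + t^3/3 + t^4/4 + Real.log (1-t)| ≤ t^5/(1-t) := by
    convert A using 2 <;> ring
  have hB : |-t + t^2/2 + (-t)^3/3 + (-t)^4/4 + Real.log (1+t)| ≤ t^5/(1-t) := by
    convert B using 2 <;> ring
  have tri : |artanh t - (t + t^3/3)| ≤
      (1/2) * |-t + t^2/2 + (-t)^3/3 + (-t)^4/4 + Real.log (1+t)|
      + (1/2) * |t + t^2/2 + t^3/3 + t^4/4 + Real.log (1-t)| := by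
    rw [key]
    calc _ ≤ |(1/2) * (-t + t^2/2 + (-t)^3/3 + (-t)^4/4 + Real.log (1+t))|
            + |(1/2) * (t + t^2/2 + t^3/3 + t^4/4 + Real.log (1-t))| := abs_sub _ _
      _ = _ := by
          rw [abs_mul, abs_mul, abs_of_pos (by norm_num : (0:ℝ) < 1/2)]
  have hdiv : t^5/(1-t) ≤ 3 * t^5 := by
    rw [div_le_iff₀ hm]
    nlinarith [pow_nonneg ht0 5]
  linarith

lemma sec_est {θ : ℝ} (hθ : |θ| ≤ 1/2) :
    (6:ℝ)/7 ≤ Real.cos θ ∧ |1 / Real.cos θ - (1 + θ^2/2)| ≤ θ^4/2 := by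
  have h1 : |θ| ≤ 1 := hθ.trans (by norm_num)
  have hb := Real.cos_bound h1
  have habs : |θ|^2 = θ^2 := sq_abs θ
  have hθ2 : θ^2 ≤ 1/4 := by nlinarith [abs_nonneg θ]
  have hθ4 : |θ|^4 = θ^4 := by rw [show (4:ℕ) = 2*2 from rfl, pow_mul, pow_mul, habs]
  rw [hθ4] at hb
  have hθ4' : θ^4 ≤ 1/16 := by nlinarith [sq_nonneg θ]
  have hb' := abs_le.1 hb
  have hc : (6:ℝ)/7 ≤ Real.cos θ := by nlinarith [hb'.1]
  refine ⟨hc, ?_⟩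
  have hcpos : (0:ℝ) < Real.cos θ := by linarith
  have heq : 1 / Real.cos θ - (1 + θ^2/2) = (1 - Real.cos θ * (1 + θ^2/2)) / Real.cos θ := by
    field_simp
  rw [heq, abs_div, abs_of_pos hcpos, div_le_iff₀ hcpos]
  have hnum : |1 - Real.cos θ * (1 + θ^2/2)| ≤ 3/7 * θ^4 := by
    rw [abs_le]
    constructor <;> nlinarith [hb'.1, hb'.2, sq_nonneg θ, sq_nonneg (θ^2)]
  nlinarith [sq_nonneg θ, sq_nonneg (θ^2)]

set_option maxHeartbeats 1000000 in
theorem artanh_sec_expansion :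
    ∃ C : ℝ, ∀ x θ : ℝ, 0 ≤ x → x ≤ 1 / 2 → |θ| ≤ 1 / 2 →
      |artanh (x * (1 / Real.cos θ)) - (x + x * θ ^ 2 / 2 + x ^ 3 / 3)| ≤
        C * (x * θ ^ 4 + x ^ 3 * θ ^ 2 + x ^ 5) := by
  refine ⟨7, fun x θ hx0 hx hθ => ?_⟩
  obtain ⟨hc, hu⟩ := sec_est hθ
  set u := 1 / Real.cos θ with hu_def
  have hcpos : (0:ℝ) < Real.cos θ := by linarith
  have hθ2 : θ^2 ≤ 1/4 := by nlinarith [sq_abs θ, abs_nonneg θ]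
  have hθ2' : (0:ℝ) ≤ θ^2 := sq_nonneg θ
  have hθ4 : θ^4 ≤ θ^2/4 := by nlinarith
  have hθ4' : (0:ℝ) ≤ θ^4 := by positivity
  have hu' := abs_le.1 hu
  have hu1 : 1 ≤ u := by nlinarith [hu'.1]
  have hu2 : u ≤ 7/6 := by nlinarith [hu'.2]
  have hs0 : 0 ≤ x * u := mul_nonneg hx0 (by linarith)
  have hs : x * u ≤ 7/12 := by nlinarith
  have hT := artanh_taylor hs0 hs
  have h36 : u^2 + u + 1 ≤ 127/36 := by nlinarith
  have hd : u - 1 ≤ 5*θ^2/8 := by linarith [hu'.2]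
  have hq0 : (0:ℝ) ≤ u^2+u+1 := by positivity
  have hq1 : (0:ℝ) ≤ 5*θ^2/8 := by positivity
  have hprod := mul_le_mul hd h36 hq0 hq1
  have hcube : u^3 - 1 ≤ 3*θ^2 := by nlinarith [hprod, hθ2']
  have hx5 : (0:ℝ) ≤ x^5 := pow_nonneg hx0 5
  have hx3 : (0:ℝ) ≤ x^3 := pow_nonneg hx0 3
  have hu5 : u^5 ≤ (7/6:ℝ)^5 := pow_le_pow_left₀ (by linarith) hu2 5
  have hxu5 : (x*u)^5 ≤ (16807/7776) * x^5 := by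
    have : (x*u)^5 = x^5 * u^5 := by ring
    rw [this]
    calc x^5 * u^5 ≤ x^5 * (7/6:ℝ)^5 := mul_le_mul_of_nonneg_left hu5 hx5
      _ = (16807/7776) * x^5 := by ring
  have h1 : |x*(u - (1 + θ^2/2))| ≤ x * (θ^4/2) := by
    rw [abs_mul, abs_of_nonneg hx0]
    exact mul_le_mul_of_nonneg_left hu hx0
  have h2 : |x^3*(u^3-1)/3| ≤ x^3 * θ^2 := by
    rw [abs_div, abs_mul, abs_of_nonneg hx3,
      abs_of_nonneg (by nlinarith : (0:ℝ) ≤ u^3-1),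
      abs_of_pos (by norm_num : (0:ℝ) < 3), div_le_iff₀ (by norm_num : (0:ℝ) < 3)]
    nlinarith
  have hdecomp : artanh (x*u) - (x + x*θ^2/2 + x^3/3) =
      (artanh (x*u) - (x*u + (x*u)^3/3)) + x*(u - (1 + θ^2/2)) + x^3*(u^3-1)/3 := by
    ring
  rw [hdecomp]
  calc |(artanh (x*u) - (x*u + (x*u)^3/3)) + x*(u - (1 + θ^2/2)) + x^3*(u^3-1)/3|
      ≤ |(artanh (x*u) - (x*u + (x*u)^3/3)) + x*(u - (1 + θ^2/2))| + |x^3*(u^3-1)/3| :=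
        abs_add_le _ _
    _ ≤ |artanh (x*u) - (x*u + (x*u)^3/3)| + |x*(u - (1 + θ^2/2))| + |x^3*(u^3-1)/3| := by
        linarith [abs_add_le (artanh (x*u) - (x*u + (x*u)^3/3)) (x*(u - (1 + θ^2/2)))]
    _ ≤ 7 * (x * θ ^ 4 + x ^ 3 * θ ^ 2 + x ^ 5) := by nlinarith [mul_nonneg hx0 hθ4']
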